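/- For every integer m ≥ 2, the Misiurewicz polynomial G_{3,m,2}(c) is irreducible over ℚ. -/

import Mathlib

open Polynomial

noncomputable section

/-- `critPoly d i` is `f_{c,d}^i(0)` as a polynomial in the variable `c` over `ℤ`,
where `f_{c,d}(x) = x^d + c`. -/
def critPoly (d : ℕ) : ℕ → Polynomial ℤ
  | 0 => 0
  | i + 1 => critPoly d i ^ d + X

/-- The field of rational functions in `c` over `ℚ`, realized as the fraction field of `ℤ[c]`. -/
abbrev RF : Type := FractionRing (Polynomial ℤ)

/-- The natural inclusion `ℤ[c] → ℚ(c)`. -/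
def toRF (p : Polynomial ℤ) : RF := algebraMap (Polynomial ℤ) RF p

/-- `G_{d,0,n} = ∏_{k ∣ n} (f_{c,d}^k(0))^{μ(n/k)}` as a rational function. -/
def G0Rat (d n : ℕ) : RF :=
  ∏ k ∈ n.divisors, toRF (critPoly d k) ^ (ArithmeticFunction.moebius (n / k))

/-- `F_{d,m,n}` as a rational function. -/
def FRat (d m n : ℕ) : RF :=
  ∏ k ∈ n.divisors,
    ((toRF (critPoly d (m + k)) - toRF (critPoly d m)) /
      (toRF (critPoly d (m - 1 + k)) - toRF (critPoly d (m - 1)))) ^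
      (ArithmeticFunction.moebius (n / k))

/-- `G_{d,m,n}` (for `m ≥ 2`) as a rational function. -/
def GRat (d m n : ℕ) : RF :=
  if n ∣ m - 1 then FRat d m n / FRat d 1 n else FRat d m n

/-- `G : ℤ[c]` is the Misiurewicz polynomial `G_{d,m,n}` (for `m ≥ 2`). -/
def IsMisiurewicz (d m n : ℕ) (G : Polynomial ℤ) : Prop := toRF G = GRat d m n

/-- `G0 : ℤ[c]` is the polynomial `G_{d,0,n}`. -/
def IsG0 (d n : ℕ) (G0 : Polynomial ℤ) : Prop := toRF G0 = G0Rat d n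

/-!
Write `a_k = f_{c,3}^k(0)`, `q = c² + 1`, and `Q`, `R` for the quotients
`(a_{m+1} - a_m) / (a_m - a_{m-1}) = a_m² + a_m a_{m-1} + a_{m-1}²` and
`(a_{m+2} - a_m) / (a_{m+1} - a_{m-1}) = a_{m+1}² + a_{m+1} a_{m-1} + a_{m-1}²`.
The Möbius product gives `G = R / Q` for even `m` and, since `F_{3,1,2} = q²`, `G = R / (Q q²)`
for odd `m`; in particular `G` is monic.

Modulo 3, `x² + xy + y² = (x - y)²` and Frobenius gives `a_{k+1} - a_k ≡ c^(3^k)`, so `G` reduces to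
a power of `q`, which is irreducible over `𝔽₃`. At `c = i` the critical orbit is `0, i, 0, i, …`,
so `Q(i) = -1`; for even `m`, `R(i) = -3`, and for odd `m` the congruence `a_k ≡ c q (mod q²)`
(`k ≥ 2` even) gives `(R / q²)(i) = -3`. Hence `G ≡ 3 (mod q)`, and as `3 ∉ (9)` the generalized
Eisenstein criterion at the prime `(3, q)` applies.
-/

namespace Polynomial

theorem Monic.sq_add_mul_add_sq {R : Type*} [CommRing R] [IsDomain R]
    {p q : R[X]} (hp : p.Monic) (hpq : q.degree < p.degree) : (p ^ 2 + p * q + q ^ 2).Monic := by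
  rcases eq_or_ne q 0 with rfl | hq
  · simpa using hp.pow 2
  have hsq : (q ^ 2).degree < (p * (p + q)).degree := by
    have hnat := natDegree_lt_natDegree hq hpq
    apply degree_lt_degree
    rw [Polynomial.natDegree_pow, hp.natDegree_mul (hp.add_of_left hpq),
      Polynomial.natDegree_add_eq_left_of_natDegree_lt hnat]
    omega
  rw [show p ^ 2 + p * q + q ^ 2 = p * (p + q) + q ^ 2 by ring]
  exact (hp.mul (hp.add_of_left hpq)).add_of_left hsq

theorem irreducible_map_cast_of_map_eq_pow_of_modByMonic_eq {p : ℕ} [Fact p.Prime]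
    {q G : ℤ[X]} (hq : q.Monic) (hq_irr : Irreducible (q.map (Int.castRingHom (ZMod p))))
    (hG : G.Monic) {N : ℕ} (hN : 0 < N)
    (hG_mod : G.map (Int.castRingHom (ZMod p)) = q.map (Int.castRingHom (ZMod p)) ^ N)
    (hG_rem : G %ₘ q = C (p : ℤ)) :
    Irreducible (G.map (Int.castRingHom ℚ)) := by
  rw [← IsPrimitive.Int.irreducible_iff_irreducible_map_cast hG.isPrimitive]
  have hdeg : 0 < G.natDegree := by
    rw [← hG.natDegree_map (Int.castRingHom (ZMod p)), hG_mod, natDegree_pow]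
    exact Nat.mul_pos hN hq_irr.natDegree_pos
  refine generalizedEisenstein (K := ZMod p) (p := N) (by simpa using hq_irr) hq
    hG.isPrimitive hdeg (by simp [hG.leadingCoeff]) (by simpa [hG.leadingCoeff] using hG_mod) ?_
  rw [hG_rem, map_C, Ne, C_eq_zero, Ideal.Quotient.eq_zero_iff_mem, algebraMap_int_eq,
    ZMod.ker_intCastRingHom, Ideal.span_singleton_pow, Ideal.mem_span_singleton]
  intro h
  have := Int.le_of_dvd (by exact_mod_cast (Fact.out : p.Prime).pos) h
  nlinarith [(Fact.out : p.Prime).two_le]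

end Polynomial

theorem sq_add_mul_add_sq_eq_sub_sq {R : Type*} [CommRing R] [CharP R 3] (x y : R) :
    x ^ 2 + x * y + y ^ 2 = (x - y) ^ 2 := by
  linear_combination x * y * CharP.ofNat_eq_zero R 3

theorem monic_X_sq_add_one : (X ^ 2 + 1 : ℤ[X]).Monic := by monicity!

theorem irreducible_X_sq_add_one_zmod_three : Irreducible (X ^ 2 + 1 : (ZMod 3)[X]) := by
  refine irreducible_of_degree_le_three_of_not_isRoot ?_ ?_
  · rw [show (X ^ 2 + 1 : (ZMod 3)[X]).natDegree = 2 by compute_degree!]; decide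
  · simp only [IsRoot, eval_add, eval_pow, eval_X, eval_one]
    decide

section critPoly

variable {d : ℕ}

@[simp] theorem critPoly_zero : critPoly d 0 = 0 := rfl

theorem critPoly_succ (k : ℕ) : critPoly d (k + 1) = critPoly d k ^ d + X := rfl

theorem critPoly_succ_monic_and_natDegree (hd : 2 ≤ d) (k : ℕ) :
    (critPoly d (k + 1)).Monic ∧ (critPoly d (k + 1)).natDegree = d ^ k := by
  induction k with
  | zero => simp [critPoly_succ, zero_pow (by omega : d ≠ 0)]
  | succ k ih =>
    obtain ⟨hmonic, hdeg⟩ := ih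
    have hlt : (X : ℤ[X]).degree < (critPoly d (k + 1) ^ d).degree := by
      rw [degree_X, degree_eq_natDegree (hmonic.pow d).ne_zero, natDegree_pow, hdeg]
      have := Nat.one_le_pow k d (by omega)
      exact_mod_cast (by nlinarith : 1 < d * d ^ k)
    rw [critPoly_succ]
    refine ⟨(hmonic.pow d).add_of_left hlt, ?_⟩
    rw [natDegree_add_eq_left_of_degree_lt hlt, natDegree_pow, hdeg, pow_succ, mul_comm]

theorem strictMono_degree_critPoly (hd : 2 ≤ d) :
    StrictMono fun k ↦ (critPoly d k).degree := by
  refine strictMono_nat_of_lt_succ fun k ↦ ?_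
  cases k with
  | zero => simp [critPoly_succ, zero_pow (by omega : d ≠ 0)]
  | succ k =>
    obtain ⟨hmonic, hdeg⟩ := critPoly_succ_monic_and_natDegree hd k
    obtain ⟨hmonic', hdeg'⟩ := critPoly_succ_monic_and_natDegree hd (k + 1)
    rw [degree_eq_natDegree hmonic.ne_zero, degree_eq_natDegree hmonic'.ne_zero, hdeg, hdeg']
    exact_mod_cast Nat.pow_lt_pow_right hd k.lt_succ_self

theorem critPoly_sub_ne_zero (hd : 2 ≤ d) {l k : ℕ} (hlk : l < k) :
    critPoly d k - critPoly d l ≠ 0 :=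
  sub_ne_zero.2 fun h ↦ (strictMono_degree_critPoly hd hlk).ne (congrArg degree h).symm

theorem map_critPoly_succ_sub (p : ℕ) [Fact p.Prime] (k : ℕ) :
    (critPoly p (k + 1) - critPoly p k).map (Int.castRingHom (ZMod p)) = X ^ p ^ k := by
  induction k with
  | zero => simp [critPoly_succ, zero_pow (Fact.out : p.Prime).ne_zero]
  | succ k ih =>
    have hdiff : critPoly p (k + 2) - critPoly p (k + 1) =
        critPoly p (k + 1) ^ p - critPoly p k ^ p :=
      add_sub_add_right_eq_sub _ _ _
    rw [hdiff, Polynomial.map_sub, Polynomial.map_pow, Polynomial.map_pow, ← sub_pow_char,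
      ← Polynomial.map_sub, ih, ← pow_mul, pow_succ]

end critPoly

theorem toRF_injective : Function.Injective toRF := IsFractionRing.injective ℤ[X] RF

theorem toRF_ne_zero {p : ℤ[X]} (hp : p ≠ 0) : toRF p ≠ 0 :=
  (map_ne_zero_iff _ toRF_injective).2 hp

theorem toRF_sub (p q : ℤ[X]) : toRF (p - q) = toRF p - toRF q := map_sub _ p q

theorem toRF_mul (p q : ℤ[X]) : toRF (p * q) = toRF p * toRF q := map_mul _ p q

def critDiffQuot (k l : ℕ) : ℤ[X] :=
  critPoly 3 k ^ 2 + critPoly 3 k * critPoly 3 l + critPoly 3 l ^ 2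

theorem critPoly_three_succ_sub_succ (k l : ℕ) :
    critPoly 3 (k + 1) - critPoly 3 (l + 1) = (critPoly 3 k - critPoly 3 l) * critDiffQuot k l := by
  rw [critPoly_succ, critPoly_succ, critDiffQuot]
  ring

theorem critDiffQuot_monic {k l : ℕ} (hlk : l < k) : (critDiffQuot k l).Monic := by
  obtain ⟨k, rfl⟩ := Nat.exists_eq_add_of_lt hlk
  exact (critPoly_succ_monic_and_natDegree (by norm_num) _).1.sq_add_mul_add_sq
    (strictMono_degree_critPoly (by norm_num) hlk)

theorem FRat_three_two (j : ℕ) :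
    FRat 3 (j + 1) 2 = toRF (critDiffQuot (j + 2) j) / toRF (critDiffQuot (j + 1) j) := by
  have hμ1 : ArithmeticFunction.moebius (2 / 1) = -1 := by
    norm_num [ArithmeticFunction.moebius_apply_prime Nat.prime_two]
  have hμ2 : ArithmeticFunction.moebius (2 / 2) = 1 := by norm_num
  have h1 := toRF_ne_zero (critPoly_sub_ne_zero (by norm_num : 2 ≤ 3) (Nat.lt_add_one j))
  have h2 := toRF_ne_zero (critPoly_sub_ne_zero (by norm_num : 2 ≤ 3) (by omega : j < j + 2))
  rw [FRat, Nat.prime_two.divisors, Finset.prod_pair (by norm_num), hμ1, hμ2,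
    zpow_neg_one, zpow_one, Nat.add_sub_cancel]
  simp only [← toRF_sub]
  rw [critPoly_three_succ_sub_succ (j + 1) j, critPoly_three_succ_sub_succ (j + 2) j, toRF_mul,
    toRF_mul, mul_div_cancel_left₀ _ h1, mul_div_cancel_left₀ _ h2, inv_mul_eq_div]

theorem FRat_three_one_two : FRat 3 1 2 = toRF ((X ^ 2 + 1) ^ 2) := by
  have hX : toRF (critDiffQuot 1 0) ≠ 0 :=
    toRF_ne_zero (critDiffQuot_monic one_pos).ne_zero
  rw [FRat_three_two 0, div_eq_iff hX, ← toRF_mul]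
  congr 1
  simp only [critDiffQuot, critPoly]
  ring

theorem IsMisiurewicz.mul_critDiffQuot_of_not_two_dvd {j : ℕ} (hj : ¬ 2 ∣ j) {G : ℤ[X]}
    (hG : IsMisiurewicz 3 (j + 1) 2 G) : G * critDiffQuot (j + 1) j = critDiffQuot (j + 2) j := by
  have hQ : toRF (critDiffQuot (j + 1) j) ≠ 0 :=
    toRF_ne_zero (critDiffQuot_monic j.lt_succ_self).ne_zero
  rw [IsMisiurewicz, GRat, Nat.add_sub_cancel, if_neg hj, FRat_three_two, eq_div_iff hQ,
    ← toRF_mul] at hG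
  exact toRF_injective hG

theorem IsMisiurewicz.mul_critDiffQuot_of_two_dvd {j : ℕ} (hj : 2 ∣ j) {G : ℤ[X]}
    (hG : IsMisiurewicz 3 (j + 1) 2 G) :
    G * critDiffQuot (j + 1) j * (X ^ 2 + 1) ^ 2 = critDiffQuot (j + 2) j := by
  have hQ : toRF (critDiffQuot (j + 1) j) ≠ 0 :=
    toRF_ne_zero (critDiffQuot_monic j.lt_succ_self).ne_zero
  have hq : toRF ((X ^ 2 + 1) ^ 2) ≠ 0 :=
    toRF_ne_zero (monic_X_sq_add_one.pow 2).ne_zero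
  rw [IsMisiurewicz, GRat, Nat.add_sub_cancel, if_pos hj, FRat_three_two, FRat_three_one_two,
    div_div, eq_div_iff (mul_ne_zero hQ hq), ← toRF_mul, ← toRF_mul, ← mul_assoc] at hG
  exact toRF_injective hG

theorem map_critDiffQuot_succ_self (j : ℕ) :
    (critDiffQuot (j + 1) j).map (Int.castRingHom (ZMod 3)) = X ^ (2 * 3 ^ j) := by
  simp only [critDiffQuot, Polynomial.map_add, Polynomial.map_pow, Polynomial.map_mul]
  rw [sq_add_mul_add_sq_eq_sub_sq, ← Polynomial.map_sub, map_critPoly_succ_sub, ← pow_mul,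
    mul_comm]

theorem map_critDiffQuot_add_two_self (j : ℕ) :
    (critDiffQuot (j + 2) j).map (Int.castRingHom (ZMod 3)) =
      X ^ (2 * 3 ^ j) * (X ^ 2 + 1) ^ (2 * 3 ^ j) := by
  simp only [critDiffQuot, Polynomial.map_add, Polynomial.map_pow, Polynomial.map_mul]
  have hsplit : critPoly 3 (j + 2) - critPoly 3 j =
      (critPoly 3 (j + 1 + 1) - critPoly 3 (j + 1)) + (critPoly 3 (j + 1) - critPoly 3 j) := by
    ring
  rw [sq_add_mul_add_sq_eq_sub_sq, ← Polynomial.map_sub, hsplit, Polynomial.map_add,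
    map_critPoly_succ_sub, map_critPoly_succ_sub, mul_comm 2, pow_mul, pow_mul, ← mul_pow,
    add_pow_char_pow, one_pow]
  ring

section GaussianInt

local notation "ι" => (Zsqrtd.sqrtd : GaussianInt)

theorem sqrtd_mul_sqrtd : ι * ι = -1 := by decide

theorem aeval_sqrtd_X_sq_add_one : aeval ι (X ^ 2 + 1 : ℤ[X]) = 0 := by
  rw [map_add, map_pow, aeval_X, map_one]; decide

theorem modByMonic_X_sq_add_one (f : ℤ[X]) :
    f %ₘ (X ^ 2 + 1) = C (aeval ι f).re + C (aeval ι f).im * X := by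
  have hrem : aeval ι (f %ₘ (X ^ 2 + 1)) = aeval ι f := by
    conv_rhs => rw [← modByMonic_add_div f (X ^ 2 + 1)]
    rw [map_add, map_mul, aeval_sqrtd_X_sq_add_one, zero_mul, add_zero]
  have hdeg : (f %ₘ (X ^ 2 + 1)).degree ≤ 1 := by
    have hlt := degree_modByMonic_lt f monic_X_sq_add_one
    rw [show (X ^ 2 + 1 : ℤ[X]).degree = 2 by compute_degree!] at hlt
    exact Order.le_of_lt_succ hlt
  rw [← hrem, eq_X_add_C_of_degree_le_one hdeg]
  simp [add_comm]

theorem irreducible_map_cast_of_map_eq_X_sq_add_one_pow {G : ℤ[X]} (hG : G.Monic) {N : ℕ}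
    (hN : 0 < N) (hG_mod : G.map (Int.castRingHom (ZMod 3)) = (X ^ 2 + 1) ^ N)
    (hG_val : aeval ι G = 3) : Irreducible (G.map (Int.castRingHom ℚ)) :=
  irreducible_map_cast_of_map_eq_pow_of_modByMonic_eq (p := 3) monic_X_sq_add_one
    (by simpa using irreducible_X_sq_add_one_zmod_three) hG hN (by simpa using hG_mod)
    (by rw [modByMonic_X_sq_add_one, hG_val]; simp)

theorem aeval_critPoly_three_two_mul (u : ℕ) :
    aeval ι (critPoly 3 (2 * u)) = 0 ∧ aeval ι (critPoly 3 (2 * u + 1)) = ι := by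
  induction u with
  | zero => simp [critPoly_succ]
  | succ u ih =>
    have heven : aeval ι (critPoly 3 (2 * (u + 1))) = 0 := by
      rw [show 2 * (u + 1) = 2 * u + 1 + 1 by ring, critPoly_succ, map_add, map_pow, ih.2, aeval_X]
      linear_combination ι * sqrtd_mul_sqrtd
    refine ⟨heven, ?_⟩
    rw [critPoly_succ, map_add, map_pow, heven, aeval_X]
    ring

theorem aeval_critDiffQuot_succ_self (k : ℕ) : aeval ι (critDiffQuot (k + 1) k) = -1 := by
  obtain ⟨u, rfl | rfl⟩ := Nat.even_or_odd' k
  · simp only [critDiffQuot, map_add, map_pow, map_mul, (aeval_critPoly_three_two_mul u).1,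
      (aeval_critPoly_three_two_mul u).2]
    linear_combination sqrtd_mul_sqrtd
  · rw [show 2 * u + 1 + 1 = 2 * (u + 1) by ring]
    simp only [critDiffQuot, map_add, map_pow, map_mul, (aeval_critPoly_three_two_mul (u + 1)).1,
      (aeval_critPoly_three_two_mul u).2]
    linear_combination sqrtd_mul_sqrtd

theorem aeval_critDiffQuot_add_two_self_of_odd (u : ℕ) :
    aeval ι (critDiffQuot (2 * u + 1 + 2) (2 * u + 1)) = -3 := by
  rw [show 2 * u + 1 + 2 = 2 * (u + 1) + 1 by ring]
  simp only [critDiffQuot, map_add, map_pow, map_mul, (aeval_critPoly_three_two_mul (u + 1)).2,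
    (aeval_critPoly_three_two_mul u).2]
  linear_combination 3 * sqrtd_mul_sqrtd

theorem exists_critPoly_three_two_mul_add_two_eq (u : ℕ) :
    ∃ t, critPoly 3 (2 * u + 2) = (X ^ 2 + 1) * (X + (X ^ 2 + 1) * t) := by
  obtain ⟨s, hs⟩ : X ^ 2 + 1 ∣ critPoly 3 (2 * u) := by
    cases u with
    | zero => simp
    | succ u =>
      obtain ⟨t, ht⟩ := exists_critPoly_three_two_mul_add_two_eq u
      exact ⟨_, ht⟩
  refine ⟨(X ^ 2 + 1) ^ 7 * s ^ 9 + 3 * (X ^ 2 + 1) ^ 4 * s ^ 6 * X +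
    3 * (X ^ 2 + 1) * s ^ 3 * X ^ 2, ?_⟩
  rw [critPoly_succ, critPoly_succ, hs]
  ring

theorem exists_critDiffQuot_add_two_self_eq_of_even (u : ℕ) :
    ∃ R, critDiffQuot (2 * u + 2 + 2) (2 * u + 2) = (X ^ 2 + 1) ^ 2 * R ∧ aeval ι R = -3 := by
  obtain ⟨t, ht⟩ := exists_critPoly_three_two_mul_add_two_eq u
  obtain ⟨t', ht'⟩ := exists_critPoly_three_two_mul_add_two_eq (u + 1)
  set s := X + (X ^ 2 + 1) * t
  set s' := X + (X ^ 2 + 1) * t'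
  have hs : aeval ι s = ι := by simp [s, aeval_sqrtd_X_sq_add_one]
  have hs' : aeval ι s' = ι := by simp [s', aeval_sqrtd_X_sq_add_one]
  refine ⟨s' ^ 2 + s' * s + s ^ 2, ?_, ?_⟩
  · rw [critDiffQuot, show 2 * u + 2 + 2 = 2 * (u + 1) + 2 by ring, ht, ht']
    ring
  · simp only [map_add, map_pow, map_mul, hs, hs']
    linear_combination 3 * sqrtd_mul_sqrtd

theorem IsMisiurewicz.eisenstein_conditions_of_even (u : ℕ) {G : ℤ[X]}
    (hG : IsMisiurewicz 3 (2 * (u + 1)) 2 G) :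
    G.Monic ∧ G.map (Int.castRingHom (ZMod 3)) = (X ^ 2 + 1) ^ (2 * 3 ^ (2 * u + 1)) ∧
      aeval ι G = 3 := by
  have hid := hG.mul_critDiffQuot_of_not_two_dvd (j := 2 * u + 1) (by omega)
  refine ⟨?_, ?_, ?_⟩
  · refine (critDiffQuot_monic (Nat.lt_add_one (2 * u + 1))).of_mul_monic_right ?_
    rw [hid]
    exact critDiffQuot_monic (by omega)
  · have h := congrArg (Polynomial.map (Int.castRingHom (ZMod 3))) hid
    rw [Polynomial.map_mul, map_critDiffQuot_succ_self, map_critDiffQuot_add_two_self,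
      mul_comm] at h
    exact mul_left_cancel₀ (pow_ne_zero _ X_ne_zero) h
  · have h := congrArg (aeval ι) hid
    rw [map_mul, aeval_critDiffQuot_succ_self, aeval_critDiffQuot_add_two_self_of_odd] at h
    linear_combination -h

theorem IsMisiurewicz.eisenstein_conditions_of_odd (u : ℕ) {G : ℤ[X]}
    (hG : IsMisiurewicz 3 (2 * (u + 1) + 1) 2 G) :
    G.Monic ∧ G.map (Int.castRingHom (ZMod 3)) = (X ^ 2 + 1) ^ (2 * 3 ^ (2 * u + 2) - 2) ∧
      aeval ι G = 3 := by
  have hid := hG.mul_critDiffQuot_of_two_dvd (j := 2 * u + 2) (by omega)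
  refine ⟨?_, ?_, ?_⟩
  · refine ((critDiffQuot_monic (Nat.lt_add_one (2 * u + 2))).mul
      (monic_X_sq_add_one.pow 2)).of_mul_monic_right ?_
    rw [← mul_assoc, hid]
    exact critDiffQuot_monic (by omega)
  · have h := congrArg (Polynomial.map (Int.castRingHom (ZMod 3))) hid
    have hsplit : ((X : (ZMod 3)[X]) ^ 2 + 1) ^ (2 * 3 ^ (2 * u + 2)) =
        (X ^ 2 + 1) ^ (2 * 3 ^ (2 * u + 2) - 2) * (X ^ 2 + 1) ^ 2 := by
      rw [← pow_add, Nat.sub_add_cancel]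
      have := Nat.one_le_pow (2 * u + 2) 3 (by norm_num)
      omega
    simp only [Polynomial.map_mul, Polynomial.map_pow, Polynomial.map_add, map_X,
      Polynomial.map_one, map_critDiffQuot_succ_self, map_critDiffQuot_add_two_self, hsplit] at h
    refine mul_right_cancel₀ (mul_ne_zero (pow_ne_zero (2 * 3 ^ (2 * u + 2)) X_ne_zero)
      (pow_ne_zero 2 irreducible_X_sq_add_one_zmod_three.ne_zero)) ?_
    linear_combination h
  · obtain ⟨R, hR, hR_val⟩ := exists_critDiffQuot_add_two_self_eq_of_even u
    have hGQ : G * critDiffQuot (2 * u + 2 + 1) (2 * u + 2) = R :=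
      mul_left_cancel₀ (monic_X_sq_add_one.pow 2).ne_zero (by rw [← hR, ← hid]; ring)
    have h := congrArg (aeval ι) hGQ
    rw [map_mul, aeval_critDiffQuot_succ_self, hR_val] at h
    linear_combination -h

end GaussianInt

/-- For every `m ≥ 2`, `G_{3,m,2}` is irreducible over `ℚ`. -/
theorem misiurewicz_irreducible_three_two (m : ℕ) (hm : 2 ≤ m)
    (G : Polynomial ℤ) (hG : IsMisiurewicz 3 m 2 G) :
    Irreducible (G.map (Int.castRingHom ℚ)) := by
  obtain ⟨u, rfl | rfl⟩ := Nat.even_or_odd' m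
  · obtain ⟨v, rfl⟩ : ∃ v, u = v + 1 := ⟨u - 1, by omega⟩
    obtain ⟨hmonic, hmod, hval⟩ := hG.eisenstein_conditions_of_even v
    exact irreducible_map_cast_of_map_eq_X_sq_add_one_pow hmonic (by positivity) hmod hval
  · obtain ⟨v, rfl⟩ : ∃ v, u = v + 1 := ⟨u - 1, by omega⟩
    obtain ⟨hmonic, hmod, hval⟩ := hG.eisenstein_conditions_of_odd v
    have hN : 0 < 2 * 3 ^ (2 * v + 2) - 2 := by
      have := Nat.one_lt_pow (n := 2 * v + 2) (by omega) (by norm_num : 1 < 3)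
      omega
    exact irreducible_map_cast_of_map_eq_X_sq_add_one_pow hmonic hN hmod hval
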